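/- arXiv:2402.17173 — 8 statements merged into one kernel-verified Lean document; each statement's English description precedes it below -/
import Mathlib

section
/- In the weighted picking sequence algorithm on identical agents, removing one chore j from the input and rerunning the algorithm weakly decreases every agent's total payment: if x = WPS(N, M) and y = WPS(N, M \ {j}) then for all i in N, p(y_i) <= p(x_i). -/
open Finset

attribute [local instance] Classical.propDecidable

/-- The agent picked by the weighted picking sequence algorithm when the current
chore-counts are `s`: an agent minimizing `s i / w i`, ties broken in favour of
the smaller index. -/
noncomputable def wpsPick {n : ℕ} [NeZero n] (w : Fin n → ℝ) (s : Fin n → ℕ) : Fin n :=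
  (Finset.univ.filter (fun i : Fin n => ∀ k : Fin n, (s i : ℝ) / w i ≤ (s k : ℝ) / w k)).min'
    (by
      obtain ⟨i, -, hi⟩ := Finset.exists_min_image Finset.univ
        (fun i : Fin n => (s i : ℝ) / w i) ⟨0, Finset.mem_univ 0⟩
      exact ⟨i, Finset.mem_filter.2 ⟨Finset.mem_univ i, fun k => hi k (Finset.mem_univ k)⟩⟩)

/-- Number of chores held by each agent after `t` rounds of the WPS algorithm. -/
noncomputable def wpsCounts {n : ℕ} [NeZero n] (w : Fin n → ℝ) : ℕ → Fin n → ℕ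
  | 0 => fun _ => 0
  | t + 1 => fun i => wpsCounts w t i + if wpsPick w (wpsCounts w t) = i then 1 else 0

/-- The agent receiving the `t`-th chore (0-indexed, chores sorted non-increasingly
by payment) in the WPS algorithm. -/
noncomputable def wpsSeq {n : ℕ} [NeZero n] (w : Fin n → ℝ) (t : ℕ) : Fin n :=
  wpsPick w (wpsCounts w t)

/-- The bundle (set of rounds/chore-ranks) received by agent `i` when `m` chores are
allocated by the WPS algorithm. -/
noncomputable def wpsBundle {n : ℕ} [NeZero n] (w : Fin n → ℝ) (m : ℕ) (i : Fin n) :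
    Finset ℕ :=
  (Finset.range m).filter (fun t => wpsSeq w t = i)

/-- Removing one chore `j` from the input of the WPS algorithm weakly decreases every
agent's total payment.  Here the original `m` chores are `0,…,m-1` with payments
`p 0 ≥ p 1 ≥ … ≥ p (m-1) ≥ 0`; after removing chore `j` the remaining chores, still in
sorted order, have payments `t ↦ p (if t < j then t else t+1)` for `t < m - 1`. -/
theorem wps_remove_chore_pay_le {n : ℕ} [NeZero n] (w : Fin n → ℝ) (hw : ∀ i, 0 < w i)
    (m j : ℕ) (hj : j < m) (p : ℕ → ℝ) (hp : ∀ t, 0 ≤ p t)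
    (hsorted : ∀ s t : ℕ, s ≤ t → p t ≤ p s) :
    ∀ i : Fin n,
      (∑ t ∈ wpsBundle w (m - 1) i, p (if t < j then t else t + 1))
        ≤ ∑ t ∈ wpsBundle w m i, p t := by
  intro i
  calc (∑ t ∈ wpsBundle w (m - 1) i, p (if t < j then t else t + 1))
      ≤ ∑ t ∈ wpsBundle w (m - 1) i, p t := by
        apply Finset.sum_le_sum
        intro t _
        split_ifs with h
        · exact le_refl _
        · exact hsorted t (t + 1) (Nat.le_succ t)
    _ ≤ ∑ t ∈ wpsBundle w m i, p t := by
        apply Finset.sum_le_sum_of_subset_of_nonneg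
        · exact Finset.filter_subset_filter _ (Finset.range_subset_range.2 (Nat.sub_le m 1))
        · intro t _ _; exact hp t
end

section
/- In the weighted picking sequence algorithm on identical agents, removing one chore j from the input weakly decreases every agent's payment up to the highest-paying chore: if x = WPS(N, M) and y = WPS(N, M \ {j}) then for all i in N, p_{-1}(y_i) <= p_{-1}(x_i), where p_{-1}(S) = p(S) minus the maximum payment of a chore in S (and 0 if S is empty). -/
open Finset

attribute [local instance] Classical.propDecidable

/-- `pm1 p S` is the payment of bundle `S` after removing its highest-paying chore,
i.e. `min_{j ∈ S} p (S \ {j})`, with the convention `pm1 p ∅ = 0`. -/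
noncomputable def pm1 {χ : Type*} [DecidableEq χ] (p : χ → ℝ) (S : Finset χ) : ℝ :=
  if h : S.Nonempty then S.inf' h (fun j => ∑ c ∈ S.erase j, p c) else 0

/-- Removing one chore `j` from the input of the WPS algorithm weakly decreases every
agent's payment up to the highest-paying chore.  The original `m` chores are `0,…,m-1`
with payments `p 0 ≥ … ≥ p (m-1) ≥ 0`; after removing chore `j` the remaining chores,
still in sorted order, have payments `t ↦ p (if t < j then t else t+1)`. -/
theorem wps_remove_chore_pm1_le {n : ℕ} [NeZero n] (w : Fin n → ℝ) (hw : ∀ i, 0 < w i)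
    (m j : ℕ) (hj : j < m) (p : ℕ → ℝ) (hp : ∀ t, 0 ≤ p t)
    (hsorted : ∀ s t : ℕ, s ≤ t → p t ≤ p s) :
    ∀ i : Fin n,
      pm1 (fun t => p (if t < j then t else t + 1)) (wpsBundle w (m - 1) i)
        ≤ pm1 p (wpsBundle w m i) := by
  intro i
  set S' := wpsBundle w (m - 1) i with hS'
  set S := wpsBundle w m i with hS
  have hsub : S' ⊆ S := by
    intro t ht
    simp only [hS', hS, wpsBundle, mem_filter, mem_range] at ht ⊢
    exact ⟨lt_of_lt_of_le ht.1 (Nat.sub_le m 1), ht.2⟩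
  have hmem : ∀ t ∈ S, t < m := by
    intro t ht
    simp only [hS, wpsBundle, mem_filter, mem_range] at ht
    exact ht.1
  have hback : ∀ t ∈ S, t ≠ m - 1 → t ∈ S' := by
    intro t ht htne
    simp only [hS, wpsBundle, mem_filter, mem_range] at ht
    simp only [hS', wpsBundle, mem_filter, mem_range]
    exact ⟨by omega, ht.2⟩
  have hf : ∀ t : ℕ, p (if t < j then t else t + 1) ≤ p t := by
    intro t; split
    · exact le_refl _
    · exact hsorted t (t + 1) (Nat.le_succ t)
  by_cases hne : S'.Nonempty
  · have hSne : S.Nonempty := ⟨hne.choose, hsub hne.choose_spec⟩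
    set m₀ := S'.min' hne with hm₀
    have hm₀S' : m₀ ∈ S' := S'.min'_mem hne
    have hm₀S : m₀ ∈ S := hsub hm₀S'
    have hm₀lt : m₀ < m - 1 := by
      have h := hm₀S'
      simp only [hS', wpsBundle, mem_filter, mem_range] at h
      exact h.1
    have hmin : ∀ t ∈ S, m₀ ≤ t := by
      intro t ht
      by_cases h : t = m - 1
      · omega
      · exact S'.min'_le t (hback t ht h)
    rw [pm1, dif_pos hne, pm1, dif_pos hSne]
    calc S'.inf' hne (fun j' => ∑ c ∈ S'.erase j', p (if c < j then c else c + 1))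
        ≤ ∑ c ∈ S'.erase m₀, p (if c < j then c else c + 1) := Finset.inf'_le _ hm₀S'
      _ ≤ ∑ c ∈ S'.erase m₀, p c := Finset.sum_le_sum fun c _ => hf c
      _ ≤ ∑ c ∈ S.erase m₀, p c := by
          apply Finset.sum_le_sum_of_subset_of_nonneg (Finset.erase_subset_erase _ hsub)
          intro c _ _; exact hp c
      _ ≤ S.inf' hSne (fun j' => ∑ c ∈ S.erase j', p c) := by
          apply Finset.le_inf'
          intro b hb
          have h1 : ∑ c ∈ S.erase m₀, p c + p m₀ = ∑ c ∈ S, p c :=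
            Finset.sum_erase_add S p hm₀S
          have h2 : ∑ c ∈ S.erase b, p c + p b = ∑ c ∈ S, p c :=
            Finset.sum_erase_add S p hb
          have hpb : p b ≤ p m₀ := hsorted m₀ b (hmin b hb)
          linarith
  · rw [pm1, dif_neg hne, pm1]
    split
    · apply Finset.le_inf'
      intro b hb
      exact Finset.sum_nonneg fun c _ => hp c
    · exact le_refl 0
end

section
/- In the weighted picking sequence algorithm on identical agents, removing one chore never creates wpEF1-envy: if x = WPS(N, M) and y = WPS(N, M \ {j}), then for all agents i, h in N, p(y_i)/w_i >= p_{-1}(x_h)/w_h. -/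
open Finset

attribute [local instance] Classical.propDecidable

-- pick minimality
lemma wpsPick_min {n : ℕ} [NeZero n] (w : Fin n → ℝ) (s : Fin n → ℕ) (k : Fin n) :
    (s (wpsPick w s) : ℝ) / w (wpsPick w s) ≤ (s k : ℝ) / w k := by
  have h := Finset.min'_mem
    (Finset.univ.filter (fun i : Fin n => ∀ k : Fin n, (s i : ℝ) / w i ≤ (s k : ℝ) / w k))
    (by
      obtain ⟨i, -, hi⟩ := Finset.exists_min_image Finset.univ
        (fun i : Fin n => (s i : ℝ) / w i) ⟨0, Finset.mem_univ 0⟩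
      exact ⟨i, Finset.mem_filter.2 ⟨Finset.mem_univ i, fun k => hi k (Finset.mem_univ k)⟩⟩)
  rw [wpsPick]
  exact (Finset.mem_filter.1 h).2 k

lemma wpsCounts_mono {n : ℕ} [NeZero n] (w : Fin n → ℝ) {s t : ℕ} (hst : s ≤ t)
    (i : Fin n) : wpsCounts w s i ≤ wpsCounts w t i := by
  induction t with
  | zero => simp_all
  | succ t ih =>
    rcases Nat.lt_or_ge s (t+1) with hs | hs
    · exact le_trans (ih (Nat.lt_succ_iff.1 hs)) (by simp [wpsCounts])
    · have : s = t + 1 := le_antisymm hst hs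
      simp [this]

lemma wpsCounts_card {n : ℕ} [NeZero n] (w : Fin n → ℝ) (q : ℕ) (i : Fin n) :
    wpsCounts w q i = (wpsBundle w q i).card := by
  induction q with
  | zero => simp [wpsCounts, wpsBundle]
  | succ q ih =>
    have : wpsBundle w (q+1) i =
        if wpsSeq w q = i then insert q (wpsBundle w q i) else wpsBundle w q i := by
      rw [wpsBundle, Finset.range_add_one]
      split_ifs with h
      · rw [Finset.filter_insert, if_pos h]; rfl
      · rw [Finset.filter_insert, if_neg h]; rfl
    rw [this, wpsCounts]
    split_ifs with h
    · rw [Finset.card_insert_of_notMem (by simp [wpsBundle])]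
      simp [ih, wpsSeq] at *
      omega
    · simp only [wpsSeq] at h
      simp [ih, h]

-- core induction
lemma wps_counts_bal {n : ℕ} [NeZero n] (w : Fin n → ℝ) (hw : ∀ i, 0 < w i) (r : ℕ) :
    ∀ i h : Fin n, ((wpsCounts w r h : ℝ) - 1) / w h ≤ (wpsCounts w r i : ℝ) / w i := by
  induction r with
  | zero =>
    intro i h
    simp only [wpsCounts, Nat.cast_zero, zero_sub, zero_div]
    exact div_nonpos_of_nonpos_of_nonneg (by norm_num) (hw h).le
  | succ r ih =>
    intro i h
    have hmono : (wpsCounts w r i : ℝ) / w i ≤ (wpsCounts w (r+1) i : ℝ) / w i := by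
      gcongr
      · exact (hw i).le
      · exact_mod_cast wpsCounts_mono w (Nat.le_succ r) i
    by_cases hgh : wpsPick w (wpsCounts w r) = h
    · have hcnt : (wpsCounts w (r+1) h : ℝ) = wpsCounts w r h + 1 := by
        simp [wpsCounts, hgh]
      rw [hcnt]
      have := wpsPick_min w (wpsCounts w r) i
      rw [hgh] at this
      calc (((wpsCounts w r h : ℝ) + 1) - 1) / w h = (wpsCounts w r h : ℝ) / w h := by ring_nf
        _ ≤ (wpsCounts w r i : ℝ) / w i := this
        _ ≤ _ := hmono
    · have hcnt : (wpsCounts w (r+1) h : ℝ) = wpsCounts w r h := by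
        simp [wpsCounts, hgh]
      rw [hcnt]
      exact (ih i h).trans hmono

lemma wps_counts_bal' {n : ℕ} [NeZero n] (w : Fin n → ℝ) (hw : ∀ i, 0 < w i) (r : ℕ)
    (i h : Fin n) :
    ((wpsCounts w (r+1) h : ℝ) - 1) / w h ≤ (wpsCounts w r i : ℝ) / w i := by
  by_cases hgh : wpsPick w (wpsCounts w r) = h
  · have hcnt : (wpsCounts w (r+1) h : ℝ) = wpsCounts w r h + 1 := by
      simp [wpsCounts, hgh]
    rw [hcnt]
    have := wpsPick_min w (wpsCounts w r) i
    rw [hgh] at this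
    calc (((wpsCounts w r h : ℝ) + 1) - 1) / w h = (wpsCounts w r h : ℝ) / w h := by ring_nf
      _ ≤ (wpsCounts w r i : ℝ) / w i := this
  · have hcnt : (wpsCounts w (r+1) h : ℝ) = wpsCounts w r h := by
      simp [wpsCounts, hgh]
    rw [hcnt]
    exact wps_counts_bal w hw r i h

-- Abel lemma
lemma abel_nonneg (p : ℕ → ℝ) (hp : ∀ t, 0 ≤ p t) (hsorted : ∀ s t : ℕ, s ≤ t → p t ≤ p s)
    (e : ℕ → ℝ) (he : ∀ R : ℕ, 0 ≤ ∑ r ∈ Finset.range R, e r) (m : ℕ) :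
    0 ≤ ∑ r ∈ Finset.range m, p r * e r := by
  have key : ∀ q : ℕ, p q * ∑ r ∈ Finset.range q, e r ≤ ∑ r ∈ Finset.range q, p r * e r := by
    intro q
    induction q with
    | zero => simp
    | succ q ih =>
      rw [Finset.sum_range_succ, Finset.sum_range_succ]
      have h1 : p (q+1) * ∑ r ∈ Finset.range (q+1), e r ≤ p q * ∑ r ∈ Finset.range (q+1), e r := by
        apply mul_le_mul_of_nonneg_right (hsorted q (q+1) (Nat.le_succ q))
        exact he (q+1)
      rw [Finset.sum_range_succ] at h1
      calc p (q+1) * (∑ r ∈ Finset.range q, e r + e q)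
          ≤ p q * (∑ r ∈ Finset.range q, e r + e q) := h1
        _ = p q * ∑ r ∈ Finset.range q, e r + p q * e q := by ring
        _ ≤ _ := by linarith
  calc (0:ℝ) ≤ p m * ∑ r ∈ Finset.range m, e r := mul_nonneg (hp m) (he m)
    _ ≤ _ := key m

lemma range_inter_bundle {n : ℕ} [NeZero n] (w : Fin n → ℝ) (R m : ℕ) (h : Fin n) :
    Finset.range R ∩ wpsBundle w m h = wpsBundle w (min R m) h := by
  ext t
  simp only [wpsBundle, Finset.mem_inter, Finset.mem_filter, Finset.mem_range, lt_min_iff]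
  tauto

lemma prefix_card_ineq {n : ℕ} [NeZero n] (w : Fin n → ℝ) (hw : ∀ i, 0 < w i)
    (m : ℕ) (hm : 1 ≤ m) (i h : Fin n) (hBne : (wpsBundle w m h).Nonempty) (R : ℕ) :
    (((Finset.range R ∩ (wpsBundle w m h).erase ((wpsBundle w m h).min' hBne)).card : ℝ)) / w h
      ≤ ((Finset.range R ∩ (wpsBundle w (m-1) i).image (· + 1)).card : ℝ) / w i := by
  set B := wpsBundle w m h with hB
  set t0 := B.min' hBne with ht0
  have hS : Finset.range R ∩ B.erase t0 = (Finset.range R ∩ B).erase t0 := by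
    ext x
    simp only [Finset.mem_inter, Finset.mem_erase]
    tauto
  have hRB : Finset.range R ∩ B = wpsBundle w (min R m) h := range_inter_bundle w R m h
  have hS' : Finset.range R ∩ (wpsBundle w (m-1) i).image (· + 1)
      = ((Finset.range (R-1)) ∩ wpsBundle w (m-1) i).image (· + 1) := by
    ext r
    simp only [Finset.mem_inter, Finset.mem_image, Finset.mem_range]
    constructor
    · rintro ⟨hr, s, hs, rfl⟩
      exact ⟨s, ⟨by omega, hs⟩, rfl⟩
    · rintro ⟨s, ⟨hsr, hs⟩, rfl⟩
      exact ⟨by omega, s, hs, rfl⟩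
  have hcard' : ((Finset.range R ∩ (wpsBundle w (m-1) i).image (· + 1)).card : ℝ)
      = (wpsCounts w (min (R-1) (m-1)) i : ℝ) := by
    rw [hS', Finset.card_image_of_injective _ (fun a b hab => by omega),
      range_inter_bundle, ← wpsCounts_card]
  rcases Finset.eq_empty_or_nonempty (Finset.range R ∩ B) with hemp | ⟨x, hx⟩
  · rw [hS, hemp]
    simp only [Finset.erase_empty, Finset.card_empty, Nat.cast_zero, zero_div]
    rw [hcard']
    exact div_nonneg (Nat.cast_nonneg _) (hw i).le
  · have hxB : x ∈ B := (Finset.mem_inter.1 hx).2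
    have hxR : x < R := Finset.mem_range.1 (Finset.mem_inter.1 hx).1
    have ht0x : t0 ≤ x := Finset.min'_le B x hxB
    have ht0mem : t0 ∈ Finset.range R ∩ B :=
      Finset.mem_inter.2 ⟨Finset.mem_range.2 (lt_of_le_of_lt ht0x hxR), Finset.min'_mem B hBne⟩
    have hR1 : 1 ≤ R := by omega
    have hcardS : ((Finset.range R ∩ B.erase t0).card : ℝ)
        = ((wpsCounts w (min R m) h : ℝ)) - 1 := by
      rw [hS, Finset.card_erase_of_mem ht0mem,
        Nat.cast_sub (Finset.one_le_card.2 ⟨t0, ht0mem⟩), Nat.cast_one, hRB, ← wpsCounts_card]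
    rw [hcardS, hcard']
    have hle : min R m ≤ min (R-1) (m-1) + 1 := by omega
    have hmono : (wpsCounts w (min R m) h : ℝ) ≤ wpsCounts w (min (R-1) (m-1) + 1) h := by
      exact_mod_cast wpsCounts_mono w hle h
    calc ((wpsCounts w (min R m) h : ℝ) - 1) / w h
        ≤ ((wpsCounts w (min (R-1) (m-1) + 1) h : ℝ) - 1) / w h := by
          gcongr
          exact (hw h).le
      _ ≤ _ := wps_counts_bal' w hw (min (R-1) (m-1)) i h

/-- Removing one chore never creates wpEF1-envy: if `x = WPS(N, M)` on `m` chores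
(payments `p 0 ≥ … ≥ p (m-1) ≥ 0`) and `y = WPS(N, M \ {j})` (remaining chores in
sorted order have payments `t ↦ p (if t < j then t else t+1)`), then for all agents
`i, h`, `p(y_i)/w_i ≥ pm1(x_h)/w_h`. -/
theorem wps_remove_chore_no_envy {n : ℕ} [NeZero n] (w : Fin n → ℝ) (hw : ∀ i, 0 < w i)
    (m j : ℕ) (hj : j < m) (p : ℕ → ℝ) (hp : ∀ t, 0 ≤ p t)
    (hsorted : ∀ s t : ℕ, s ≤ t → p t ≤ p s) :
    ∀ i h : Fin n,
      (∑ t ∈ wpsBundle w (m - 1) i, p (if t < j then t else t + 1)) / w i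
        ≥ pm1 p (wpsBundle w m h) / w h := by
  intro i h
  have hm : 1 ≤ m := by omega
  set B := wpsBundle w m h with hB
  set B' := wpsBundle w (m-1) i with hB'
  have hLHS0 : 0 ≤ ∑ t ∈ B', p (if t < j then t else t + 1) :=
    Finset.sum_nonneg fun t _ => hp _
  by_cases hBne : B.Nonempty
  · set t0 := B.min' hBne with ht0
    have hpm1 : pm1 p B ≤ ∑ t ∈ B.erase t0, p t := by
      rw [pm1, dif_pos hBne]
      exact Finset.inf'_le _ (Finset.min'_mem B hBne)
    -- step A
    have hstepA : ∑ t ∈ B', p (t + 1) ≤ ∑ t ∈ B', p (if t < j then t else t + 1) := by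
      apply Finset.sum_le_sum
      intro t _
      split_ifs with ht
      · exact hsorted t (t+1) (Nat.le_succ t)
      · exact le_refl _
    -- middle inequality via Abel
    set S : Finset ℕ := B.erase t0 with hSdef
    set S' : Finset ℕ := B'.image (· + 1) with hS'def
    have hSsub : S ⊆ Finset.range m := fun x hx =>
      Finset.filter_subset _ _ (Finset.mem_of_mem_erase hx)
    have hS'sub : S' ⊆ Finset.range m := by
      intro x hx
      obtain ⟨s, hs, rfl⟩ := Finset.mem_image.1 hx
      have := Finset.mem_range.1 (Finset.mem_of_mem_filter s hs)
      exact Finset.mem_range.2 (by omega)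
    have h1 : ∑ r ∈ Finset.range m, (if r ∈ S then p r else 0) = ∑ t ∈ S, p t := by
      rw [← Finset.sum_subset hSsub (fun x _ hx => if_neg hx)]
      exact Finset.sum_congr rfl (fun x hx => if_pos hx)
    have h2 : ∑ r ∈ Finset.range m, (if r ∈ S' then p r else 0) = ∑ t ∈ B', p (t+1) := by
      rw [← Finset.sum_subset hS'sub (fun x _ hx => if_neg hx),
        Finset.sum_congr rfl (fun x hx => if_pos hx),
        Finset.sum_image (fun a _ b _ hab => by omega)]
    set e : ℕ → ℝ := fun r =>
      (if r ∈ S' then (1:ℝ) else 0) / w i - (if r ∈ S then (1:ℝ) else 0) / w h with hedef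
    have he : ∀ R : ℕ, 0 ≤ ∑ r ∈ Finset.range R, e r := by
      intro R
      have hsum : ∑ r ∈ Finset.range R, e r
          = ((Finset.range R ∩ S').card : ℝ) / w i - ((Finset.range R ∩ S).card : ℝ) / w h := by
        rw [hedef, Finset.sum_sub_distrib, ← Finset.sum_div, ← Finset.sum_div,
          Finset.sum_boole, Finset.sum_boole, Finset.filter_mem_eq_inter,
          Finset.filter_mem_eq_inter]
      rw [hsum, sub_nonneg]
      exact prefix_card_ineq w hw m hm i h hBne R
    have habel := abel_nonneg p hp hsorted e he m
    have hsum2 : ∑ r ∈ Finset.range m, p r * e r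
        = (∑ t ∈ B', p (t+1)) / w i - (∑ t ∈ S, p t) / w h := by
      rw [← h1, ← h2, Finset.sum_div, Finset.sum_div, ← Finset.sum_sub_distrib]
      apply Finset.sum_congr rfl
      intro r _
      rw [hedef]
      by_cases hrS' : r ∈ S' <;> by_cases hrS : r ∈ S <;>
        simp only [if_pos, if_neg, hrS', hrS, if_true, if_false, ite_true, ite_false] <;> ring
    rw [hsum2] at habel
    have hmid : (∑ t ∈ S, p t) / w h ≤ (∑ t ∈ B', p (t+1)) / w i := by linarith
    calc pm1 p B / w h ≤ (∑ t ∈ S, p t) / w h := by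
          gcongr
          exact (hw h).le
      _ ≤ (∑ t ∈ B', p (t+1)) / w i := hmid
      _ ≤ _ := by
          gcongr
          exact (hw i).le
  · rw [pm1, dif_neg hBne, zero_div]
    exact div_nonneg hLHS0 (hw i).le
end

section
/- In the weighted picking sequence algorithm on identical agents, adding one chore never creates wpEF1-envy toward the previous allocation: if x = WPS(N, M) and y = WPS(N, M ∪ {j}) for a chore j not in M, then for all agents i, h in N, p_{-1}(y_h)/w_h <= p(x_i)/w_i. -/
open Finset

attribute [local instance] Classical.propDecidable

section Aux

variable {n : ℕ} [NeZero n] (w : Fin n → ℝ)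

lemma wpsPick_spec (s : Fin n → ℕ) (k : Fin n) :
    (s (wpsPick w s) : ℝ) / w (wpsPick w s) ≤ (s k : ℝ) / w k := by
  have h : wpsPick w s ∈ Finset.univ.filter
      (fun i : Fin n => ∀ k : Fin n, (s i : ℝ) / w i ≤ (s k : ℝ) / w k) :=
    Finset.min'_mem _ _
  exact (Finset.mem_filter.1 h).2 k

lemma wpsCounts_mono_s5 (i : Fin n) : Monotone (fun t => wpsCounts w t i) :=
  monotone_nat_of_le_succ (fun t => by
    show wpsCounts w t i ≤ wpsCounts w t i + _
    exact Nat.le_add_right _ _)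

/-- Core inequality: at any time, the count of `h` so far minus one, scaled by `1/w h`,
is at most the count of any `i` at the previous time scaled by `1/w i`. -/
lemma wps_core (hw : ∀ i, 0 < w i) (i h : Fin n) :
    ∀ t, ((wpsCounts w (t + 1) h - 1 : ℕ) : ℝ) / w h ≤ (wpsCounts w t i : ℝ) / w i := by
  intro t
  induction t with
  | zero =>
      have h1 : wpsCounts w 1 h ≤ 1 := by
        show wpsCounts w 0 h + _ ≤ 1
        simp only [wpsCounts]
        by_cases hc : wpsPick w (fun _ => 0) = h <;> simp [hc]
      have : wpsCounts w 1 h - 1 = 0 := by omega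
      rw [this]
      simp [wpsCounts]
  | succ t ih =>
      by_cases hph : wpsPick w (wpsCounts w (t + 1)) = h
      · have hc : wpsCounts w (t + 2) h = wpsCounts w (t + 1) h + 1 := by
          show wpsCounts w (t + 1) h + _ = _
          rw [if_pos hph]
        have := wpsPick_spec w (wpsCounts w (t + 1)) i
        rw [hph] at this
        rw [hc]
        simpa using this
      · have hc : wpsCounts w (t + 2) h = wpsCounts w (t + 1) h := by
          show wpsCounts w (t + 1) h + _ = _
          rw [if_neg hph, add_zero]
        rw [hc]
        refine le_trans ih ?_
        have hmono : wpsCounts w t i ≤ wpsCounts w (t + 1) i :=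
          wpsCounts_mono_s5 w i (Nat.le_succ t)
        exact (div_le_div_iff_of_pos_right (hw i)).2 (by exact_mod_cast hmono)

lemma card_wpsBundle (T : ℕ) (i : Fin n) :
    (wpsBundle w T i).card = wpsCounts w T i := by
  induction T with
  | zero => simp [wpsBundle, wpsCounts]
  | succ T ih =>
      have hstep : wpsCounts w (T + 1) i
          = wpsCounts w T i + if wpsSeq w T = i then 1 else 0 := rfl
      rw [hstep, ← ih]
      unfold wpsBundle
      rw [Finset.range_add_one, Finset.filter_insert]
      by_cases hc : wpsSeq w T = i
      · rw [if_pos hc, if_pos hc,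
          Finset.card_insert_of_notMem (by simp)]
      · rw [if_neg hc, if_neg hc, add_zero]

lemma wpsBundle_filter_le (T a : ℕ) (i : Fin n) :
    (wpsBundle w T i).filter (fun t => t ≤ a) = wpsBundle w (min (a + 1) T) i := by
  ext t
  simp only [wpsBundle, Finset.mem_filter, Finset.mem_range]
  constructor
  · rintro ⟨⟨h1, h2⟩, h3⟩; exact ⟨by omega, h2⟩
  · rintro ⟨h1, h2⟩; exact ⟨⟨by omega, h2⟩, by omega⟩

lemma wpsBundle_filter_lt (T a : ℕ) (i : Fin n) :
    (wpsBundle w T i).filter (fun t => t < a) = wpsBundle w (min a T) i := by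
  ext t
  simp only [wpsBundle, Finset.mem_filter, Finset.mem_range]
  constructor
  · rintro ⟨⟨h1, h2⟩, h3⟩; exact ⟨by omega, h2⟩
  · rintro ⟨h1, h2⟩; exact ⟨⟨by omega, h2⟩, by omega⟩

/-- `pm1` of a nonempty set is the sum with the minimal-index (highest-payment)
element removed, when `p` is non-increasing. -/
lemma pm1_eq_erase_min' (p : ℕ → ℝ) (hsorted : ∀ s t : ℕ, s ≤ t → p t ≤ p s)
    (S : Finset ℕ) (hS : S.Nonempty) :
    pm1 p S = ∑ c ∈ S.erase (S.min' hS), p c := by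
  rw [pm1, dif_pos hS]
  refine le_antisymm (Finset.inf'_le _ (S.min'_mem hS)) ?_
  refine Finset.le_inf' _ _ (fun j hj => ?_)
  rw [Finset.sum_erase_eq_sub (S.min'_mem hS), Finset.sum_erase_eq_sub hj]
  have := hsorted _ _ (S.min'_le j hj)
  linarith

/-- Layer-cake decomposition of a non-increasing payment function. -/
lemma layer_cake (p : ℕ → ℝ) (m : ℕ) {t : ℕ} (ht : t ≤ m) :
    p t = p m + ∑ a ∈ Finset.range m, (if t ≤ a then p a - p (a + 1) else 0) := by
  have h1 : ∑ a ∈ Finset.range m, (if t ≤ a then p a - p (a + 1) else 0)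
      = ∑ a ∈ Finset.Ico t m, (p a - p (a + 1)) := by
    rw [← Finset.sum_filter]
    congr 1
    ext a
    simp only [Finset.mem_filter, Finset.mem_range, Finset.mem_Ico]
    omega
  rw [h1]
  have h2 : ∑ a ∈ Finset.Ico t m, (p a - p (a + 1))
      = -∑ a ∈ Finset.Ico t m, (p (a + 1) - p a) := by
    rw [← Finset.sum_neg_distrib]
    congr 1; ext a; ring
  rw [h2, Finset.sum_Ico_eq_sub _ ht, Finset.sum_range_sub (fun x => p x),
    Finset.sum_range_sub (fun x => p x)]
  ring

/-- Decompose a sum of payments over a bundle via the layer-cake formula. -/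
lemma sum_decomp (p : ℕ → ℝ) (m : ℕ) (F : Finset ℕ) (f : ℕ → ℕ)
    (hf : ∀ t ∈ F, f t ≤ m) :
    ∑ t ∈ F, p (f t)
      = (F.card : ℝ) * p m
        + ∑ a ∈ Finset.range m,
            (p a - p (a + 1)) * ((F.filter (fun t => f t ≤ a)).card : ℝ) := by
  have hcongr : ∀ t ∈ F, p (f t)
      = p m + ∑ a ∈ Finset.range m, (if f t ≤ a then p a - p (a + 1) else 0) :=
    fun t ht => layer_cake p m (hf t ht)
  rw [Finset.sum_congr rfl hcongr, Finset.sum_add_distrib, Finset.sum_const,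
    Finset.sum_comm]
  congr 1
  · rw [nsmul_eq_mul]
  · refine Finset.sum_congr rfl fun a _ => ?_
    rw [← Finset.sum_filter, Finset.sum_const, nsmul_eq_mul, mul_comm]

end Aux

/-- Adding one chore never creates wpEF1-envy toward the previous allocation:
if `x = WPS(N, M)` and `y = WPS(N, M ∪ {j})`, then `pm1(y_h)/w_h ≤ p(x_i)/w_i` for all
agents `i, h`.  Here the enlarged chore set `M ∪ {j}` consists of `m + 1` chores
`0,…,m` with payments `p 0 ≥ … ≥ p m ≥ 0`, the new chore `j` having rank `j`; the
original set `M`, in sorted order, has payments `t ↦ p (if t < j then t else t+1)`. -/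
theorem wps_add_chore_no_envy {n : ℕ} [NeZero n] (w : Fin n → ℝ) (hw : ∀ i, 0 < w i)
    (m j : ℕ) (hj : j < m + 1) (p : ℕ → ℝ) (hp : ∀ t, 0 ≤ p t)
    (hsorted : ∀ s t : ℕ, s ≤ t → p t ≤ p s) :
    ∀ i h : Fin n,
      pm1 p (wpsBundle w (m + 1) h) / w h
        ≤ (∑ t ∈ wpsBundle w m i, p (if t < j then t else t + 1)) / w i := by
  intro i h
  by_cases hS : (wpsBundle w (m + 1) h).Nonempty
  swap
  · rw [pm1, dif_neg hS, zero_div]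
    exact div_nonneg (Finset.sum_nonneg fun t _ => hp _) (hw i).le
  · set S : Finset ℕ := wpsBundle w (m + 1) h with hSdef
    set B : Finset ℕ := wpsBundle w m i with hBdef
    set t0 : ℕ := S.min' hS with ht0
    rw [pm1_eq_erase_min' p hsorted S hS, ← ht0]
    set S' : Finset ℕ := S.erase t0 with hS'def
    set σ : ℕ → ℕ := fun t => if t < j then t else t + 1 with hσ
    have hmemS : ∀ t ∈ S, t ≤ m := by
      intro t ht
      have := (Finset.mem_filter.1 ht).1
      have := Finset.mem_range.1 this
      omega
    have hmemS' : ∀ t ∈ S', t ≤ m := fun t ht => hmemS t (Finset.mem_of_mem_erase ht)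
    have hmemB : ∀ t ∈ B, σ t ≤ m := by
      intro t ht
      have := Finset.mem_range.1 (Finset.mem_filter.1 ht).1
      simp only [hσ]
      split <;> omega
    -- decompose both sums
    have hLHS := sum_decomp p m S' (fun t => t) hmemS'
    have hRHS := sum_decomp p m B σ hmemB
    simp only [hσ] at hRHS
    rw [hLHS, hRHS]
    -- cardinality facts
    have hcardS' : S'.card = wpsCounts w (m + 1) h - 1 := by
      rw [hS'def, Finset.card_erase_of_mem (S.min'_mem hS), hSdef, card_wpsBundle]
    have hcardB : B.card = wpsCounts w m i := card_wpsBundle w m i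
    -- count inequality for each threshold a < m
    have hcnt : ∀ a, a < m →
        ((S'.filter (fun t => t ≤ a)).card : ℝ) / w h
          ≤ ((B.filter (fun t => (if t < j then t else t + 1) ≤ a)).card : ℝ) / w i := by
      intro a ha
      have hfe : S'.filter (fun t => t ≤ a) = (S.filter (fun t => t ≤ a)).erase t0 :=
        Finset.filter_erase _ _ _
      have hFc : (S.filter (fun t => t ≤ a)).card = wpsCounts w (a + 1) h := by
        rw [hSdef, wpsBundle_filter_le, Nat.min_eq_left (by omega), ← card_wpsBundle]
      have hleft : (S'.filter (fun t => t ≤ a)).card ≤ wpsCounts w (a + 1) h - 1 := by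
        by_cases hmem : t0 ∈ S.filter (fun t => t ≤ a)
        · rw [hfe, Finset.card_erase_of_mem hmem, hFc]
        · have hempty : S.filter (fun t => t ≤ a) = ∅ := by
            by_contra hne
            obtain ⟨t, htmem⟩ := Finset.nonempty_iff_ne_empty.2 hne
            have ht1 := Finset.mem_filter.1 htmem
            have : t0 ≤ t := S.min'_le t ht1.1
            exact hmem (Finset.mem_filter.2 ⟨S.min'_mem hS, by omega⟩)
          rw [hfe, hempty]
          simp
      have hright : wpsCounts w a i ≤ (B.filter (fun t => (if t < j then t else t + 1) ≤ a)).card := by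
        have hsub : B.filter (fun t => t < a) ⊆ B.filter (fun t => (if t < j then t else t + 1) ≤ a) := by
          intro t ht
          have ht1 := Finset.mem_filter.1 ht
          refine Finset.mem_filter.2 ⟨ht1.1, ?_⟩
          split <;> omega
        have hc : (B.filter (fun t => t < a)).card = wpsCounts w a i := by
          rw [hBdef, wpsBundle_filter_lt, Nat.min_eq_left (by omega), ← card_wpsBundle]
        rw [← hc]
        exact Finset.card_le_card hsub
      have hcore := wps_core w hw i h a
      refine le_trans ?_ (le_trans hcore ?_)
      · exact (div_le_div_iff_of_pos_right (hw h)).2 (by exact_mod_cast hleft)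
      · exact (div_le_div_iff_of_pos_right (hw i)).2 (by exact_mod_cast hright)
    -- constant-term inequality
    have hconst : (S'.card : ℝ) / w h ≤ (B.card : ℝ) / w i := by
      rw [hcardS', hcardB]
      exact wps_core w hw i h m
    -- combine
    rw [add_div, add_div, Finset.sum_div, Finset.sum_div]
    refine add_le_add ?_ (Finset.sum_le_sum fun a ha => ?_)
    · rw [mul_comm, mul_div_assoc, mul_comm ((B.card : ℝ)), mul_div_assoc]
      exact mul_le_mul_of_nonneg_left hconst (hp m)
    · rw [mul_div_assoc, mul_div_assoc]
      refine mul_le_mul_of_nonneg_left (hcnt a (Finset.mem_range.1 ha)) ?_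
      have := hsorted a (a + 1) (Nat.le_succ a)
      linarith
end

section
/- In the continuous-rate interpretation of algorithm A on identical chores, the invariant y_i(t) = x_i(t - y_1(t)) holds for all rounds 0 <= t <= m and all agents i >= 2, where y_i(t) is the number of chores agent i holds after t rounds of the WPS algorithm and x_i(s) is the number of chores agent i holds after s transfer steps of algorithm A. -/
open Finset

attribute [local instance] Classical.propDecidable

/-- The recipient of a transfer in algorithm `A`: among agents `k ≠ 0` (agent `0`
plays the role of "agent 1" holding all chores initially), the one minimizing
`x k / w k`, ties broken in favour of the smaller index. -/
noncomputable def aPick {n : ℕ} [NeZero n] (w : Fin n → ℝ) (x : Fin n → ℕ) : Fin n :=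
  let s := Finset.univ.filter
    (fun i : Fin n => i ≠ 0 ∧ ∀ k : Fin n, k ≠ 0 → (x i : ℝ) / w i ≤ (x k : ℝ) / w k)
  if h : s.Nonempty then s.min' h else 0

/-- One transfer step of algorithm `A`: move a single (identical) chore from agent `0`
to the agent `aPick w x`. -/
noncomputable def aStep {n : ℕ} [NeZero n] (w : Fin n → ℝ) (x : Fin n → ℕ) : Fin n → ℕ :=
  fun i => if i = 0 then x 0 - 1 else if aPick w x = i then x i + 1 else x i

/-- The chore counts after `t` transfer steps of algorithm `A`, started from the
allocation giving all `m` identical chores to agent `0`. -/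
noncomputable def aIter {n : ℕ} [NeZero n] (w : Fin n → ℝ) (m : ℕ) : ℕ → Fin n → ℕ
  | 0 => fun i => if i = 0 then m else 0
  | t + 1 => aStep w (aIter w m t)

/-- wpEF1 for an allocation of identical chores of payment `1`, recorded by its counts
vector `x`: here `p(x_i) = x i` and `p₋₁(x_i) = x i - 1` (or `0` if `x i = 0`). -/
def wpEF1Counts {n : ℕ} (w : Fin n → ℝ) (x : Fin n → ℕ) : Prop :=
  ∀ i h : Fin n, (if x i = 0 then (0 : ℝ) else (x i : ℝ) - 1) / w i ≤ (x h : ℝ) / w h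

lemma wpsCounts_zero_le {n : ℕ} [NeZero n] (w : Fin n → ℝ) :
    ∀ t, wpsCounts w t 0 ≤ t := by
  intro t
  induction t with
  | zero => simp [wpsCounts]
  | succ t ih =>
    show wpsCounts w t 0 + (if _ then 1 else 0) ≤ t + 1
    split <;> omega

lemma aPick_eq_of_wpsPick {n : ℕ} [NeZero n] (w : Fin n → ℝ)
    (s x : Fin n → ℕ) (hx : ∀ i : Fin n, i ≠ 0 → x i = s i)
    (hne : wpsPick w s ≠ 0) : aPick w x = wpsPick w s := by
  set j := wpsPick w s with hj
  have hjmem := Finset.min'_mem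
    (Finset.univ.filter (fun i : Fin n => ∀ k : Fin n, (s i : ℝ) / w i ≤ (s k : ℝ) / w k))
    (by
      obtain ⟨i, -, hi⟩ := Finset.exists_min_image Finset.univ
        (fun i : Fin n => (s i : ℝ) / w i) ⟨0, Finset.mem_univ 0⟩
      exact ⟨i, Finset.mem_filter.2 ⟨Finset.mem_univ i, fun k => hi k (Finset.mem_univ k)⟩⟩)
  have hjmin : ∀ k : Fin n, (s j : ℝ) / w j ≤ (s k : ℝ) / w k :=
    (Finset.mem_filter.1 hjmem).2
  set A := Finset.univ.filter
    (fun i : Fin n => i ≠ 0 ∧ ∀ k : Fin n, k ≠ 0 → (x i : ℝ) / w i ≤ (x k : ℝ) / w k) with hA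
  have hjA : j ∈ A := by
    refine Finset.mem_filter.2 ⟨Finset.mem_univ j, hne, fun k hk => ?_⟩
    rw [hx j hne, hx k hk]; exact hjmin k
  have hAne : A.Nonempty := ⟨j, hjA⟩
  have : aPick w x = A.min' hAne := by
    rw [aPick]; simp only [← hA]; rw [dif_pos hAne]
  rw [this]
  apply le_antisymm (Finset.min'_le _ _ hjA)
  -- j ≤ A.min'
  have hkmem := Finset.min'_mem A hAne
  obtain ⟨-, hk0, hkmin⟩ := Finset.mem_filter.1 hkmem
  apply Finset.le_min'
  intro y hy
  obtain ⟨-, hy0, hymin⟩ := Finset.mem_filter.1 hy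
  -- y is a global argmin for s
  have hyg : ∀ l : Fin n, (s y : ℝ) / w y ≤ (s l : ℝ) / w l := by
    intro l
    have h1 : (x y : ℝ) / w y ≤ (x j : ℝ) / w j := hymin j hne
    rw [hx y hy0, hx j hne] at h1
    exact h1.trans (hjmin l)
  exact Finset.min'_le _ _ (Finset.mem_filter.2 ⟨Finset.mem_univ y, hyg⟩)

/-- The invariant relating the WPS run and algorithm `A` on `m` identical chores:
for all rounds `0 ≤ t ≤ m` and all agents `i ≠ 0` (i.e. `i ≥ 2` in 1-indexed terms),
`y_i(t) = x_i(t - y_1(t))`, where `y_i(t)` is the number of chores agent `i` holds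
after `t` rounds of WPS and `x_i(s)` is the number of chores agent `i` holds after
`s` transfer steps of algorithm `A`. -/
theorem wps_algA_invariant {n : ℕ} [NeZero n] (hn : 2 ≤ n) (w : Fin n → ℝ)
    (hw : ∀ i, 0 < w i) (m : ℕ) :
    ∀ t ≤ m, ∀ i : Fin n, i ≠ 0 →
      wpsCounts w t i = aIter w m (t - wpsCounts w t 0) i := by
  have main : ∀ t, ∀ i : Fin n, i ≠ 0 →
      wpsCounts w t i = aIter w m (t - wpsCounts w t 0) i := by
    intro t
    induction t with
    | zero =>
      intro i hi
      simp [wpsCounts, aIter, hi]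
    | succ t ih =>
      intro i hi
      have hy0 : wpsCounts w t 0 ≤ t := wpsCounts_zero_le w t
      by_cases hj : wpsPick w (wpsCounts w t) = 0
      · have h1 : wpsCounts w (t + 1) i = wpsCounts w t i := by
          show wpsCounts w t i + (if _ then 1 else 0) = _
          rw [if_neg (by rw [hj]; exact fun h => hi h.symm)]; omega
        have h0 : wpsCounts w (t + 1) 0 = wpsCounts w t 0 + 1 := by
          show wpsCounts w t 0 + (if _ then 1 else 0) = _
          rw [if_pos hj]
        rw [h1, h0, show t + 1 - (wpsCounts w t 0 + 1) = t - wpsCounts w t 0 by omega]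
        exact ih i hi
      · have h0 : wpsCounts w (t + 1) 0 = wpsCounts w t 0 := by
          show wpsCounts w t 0 + (if _ then 1 else 0) = _
          rw [if_neg hj]; omega
        have hs : t + 1 - wpsCounts w (t + 1) 0 = (t - wpsCounts w t 0) + 1 := by
          rw [h0]; omega
        have hpick : aPick w (aIter w m (t - wpsCounts w t 0)) = wpsPick w (wpsCounts w t) :=
          aPick_eq_of_wpsPick w (wpsCounts w t) _ (fun k hk => (ih k hk).symm) hj
        rw [hs]
        show wpsCounts w t i + (if _ then 1 else 0)
          = aStep w (aIter w m (t - wpsCounts w t 0)) i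
        rw [aStep]
        simp only [if_neg hi, hpick, ih i hi]
        split <;> rfl
  intro t _ i hi
  exact main t i hi
end

section
/- Every allocation encountered during Algorithm 4 (two-chore-types algorithm) is fractionally Pareto-optimal. More precisely: in a two-chore-types instance with agents sorted so d_{1A}/d_{1B} <= ... <= d_{nA}/d_{nB}, if payments are set as p_A = d_{iA}, p_B = d_{iB} for pivot agent i, and the allocation x gives only A-chores to agents h < i and only B-chores to agents h > i, then (x, p) satisfies the MPB condition for every agent, and hence x is fPO. -/
open Finset

/-- First welfare theorem: an MPB allocation with positive disutilities and prices
is fractionally Pareto-optimal. -/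
lemma firstWelfare_aux {n : ℕ} {χ : Type*} [Fintype χ] [DecidableEq χ]
    (d : Fin n → χ → ℝ) (p : χ → ℝ)
    (hd : ∀ h c, 0 < d h c) (hp : ∀ c, 0 < p c)
    (x : Fin n → Finset χ)
    (halloc : ∀ c : χ, ∃! h : Fin n, c ∈ x h)
    (mpb : ∀ h : Fin n, ∀ c ∈ x h, ∀ c' : χ, d h c / p c ≤ d h c' / p c') :
    ¬ ∃ z : Fin n → χ → ℝ,
        (∀ h c, 0 ≤ z h c) ∧ (∀ c : χ, ∑ h : Fin n, z h c = 1)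
        ∧ (∀ h : Fin n, (∑ c : χ, z h c * d h c) ≤ ∑ c ∈ x h, d h c)
        ∧ (∃ h : Fin n, (∑ c : χ, z h c * d h c) < ∑ c ∈ x h, d h c) := by
  rintro ⟨z, hz0, hz1, hzle, h0, hzlt⟩
  -- key per-agent payment bound
  have key : ∀ h : Fin n,
      (∑ c : χ, z h c * p c ≤ ∑ c ∈ x h, p c) ∧
      ((∑ c : χ, z h c * d h c) < (∑ c ∈ x h, d h c) →
        ∑ c : χ, z h c * p c < ∑ c ∈ x h, p c) := by
    intro h
    rcases (x h).eq_empty_or_nonempty with he | ⟨c0, hc0⟩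
    · have hzero : ∀ c : χ, z h c = 0 := by
        have hle := hzle h
        rw [he] at hle
        simp only [Finset.sum_empty] at hle
        have hall : ∀ c ∈ (Finset.univ : Finset χ), z h c * d h c = 0 := by
          have := (Finset.sum_eq_zero_iff_of_nonneg (fun c _ =>
            mul_nonneg (hz0 h c) (hd h c).le)).mp
            (le_antisymm hle (Finset.sum_nonneg (fun c _ =>
              mul_nonneg (hz0 h c) (hd h c).le)))
          exact this
        intro c
        have := hall c (Finset.mem_univ c)
        rcases mul_eq_zero.mp this with h' | h'
        · exact h'
        · exact absurd h' (hd h c).ne'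
      constructor
      · rw [he]
        simp [hzero]
      · intro hlt
        rw [he] at hlt
        simp [hzero] at hlt
    · set β := d h c0 / p c0 with hβ
      have hb0 : 0 < β := div_pos (hd h c0) (hp c0)
      have hdp : ∀ c ∈ x h, d h c = β * p c := by
        intro c hc
        have h1 := mpb h c hc c0
        have h2 := mpb h c0 hc0 c
        have heq : d h c / p c = β := le_antisymm h1 h2
        rw [div_eq_iff (hp c).ne'] at heq
        linarith
      have hpb : ∀ c : χ, β * p c ≤ d h c := by
        intro c
        have := mpb h c0 hc0 c
        rw [← hβ] at this
        exact (le_div_iff₀ (hp c)).mp this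
      have hsum1 : β * (∑ c : χ, z h c * p c) ≤ ∑ c : χ, z h c * d h c := by
        rw [Finset.mul_sum]
        refine Finset.sum_le_sum fun c _ => ?_
        calc β * (z h c * p c) = z h c * (β * p c) := by ring
          _ ≤ z h c * d h c := mul_le_mul_of_nonneg_left (hpb c) (hz0 h c)
      have hsum2 : (∑ c ∈ x h, d h c) = β * ∑ c ∈ x h, p c := by
        rw [Finset.mul_sum]
        exact Finset.sum_congr rfl fun c hc => hdp c hc
      constructor
      · have hle := hzle h
        have : β * (∑ c : χ, z h c * p c) ≤ β * ∑ c ∈ x h, p c := by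
          rw [← hsum2]; linarith
        exact le_of_mul_le_mul_left this hb0
      · intro hlt
        have : β * (∑ c : χ, z h c * p c) < β * ∑ c ∈ x h, p c := by
          rw [← hsum2]; linarith
        exact lt_of_mul_lt_mul_left this hb0.le
  -- total price paid under x equals total of all prices
  have tot : (∑ h : Fin n, ∑ c ∈ x h, p c) = ∑ c : χ, p c := by
    have step : ∀ h : Fin n, (∑ c ∈ x h, p c)
        = ∑ c : χ, if c ∈ x h then p c else 0 := by
      intro h
      rw [Finset.sum_ite_mem, Finset.univ_inter]
    calc (∑ h : Fin n, ∑ c ∈ x h, p c)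
        = ∑ h : Fin n, ∑ c : χ, if c ∈ x h then p c else 0 := by
          exact Finset.sum_congr rfl fun h _ => step h
      _ = ∑ c : χ, ∑ h : Fin n, if c ∈ x h then p c else 0 := Finset.sum_comm
      _ = ∑ c : χ, p c := by
          refine Finset.sum_congr rfl fun c _ => ?_
          obtain ⟨hc, hmem, huniq⟩ := halloc c
          rw [Finset.sum_eq_single hc]
          · rw [if_pos hmem]
          · intro b _ hb
            rw [if_neg]
            exact fun hcb => hb (huniq b hcb)
          · intro habs
            exact absurd (Finset.mem_univ hc) habs
  -- total price paid under z equals total of all prices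
  have totz : (∑ h : Fin n, ∑ c : χ, z h c * p c) = ∑ c : χ, p c := by
    rw [Finset.sum_comm]
    refine Finset.sum_congr rfl fun c _ => ?_
    rw [← Finset.sum_mul, hz1 c, one_mul]
  have hstrict : (∑ h : Fin n, ∑ c : χ, z h c * p c)
      < ∑ h : Fin n, ∑ c ∈ x h, p c := by
    refine Finset.sum_lt_sum (fun h _ => (key h).1) ⟨h0, Finset.mem_univ h0, (key h0).2 hzlt⟩
  rw [tot, totz] at hstrict
  exact lt_irrefl _ hstrict

/-- In a two-chore-types instance (chore `c` is an `A`-chore iff `ty c = true`), with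
agents sorted so that `dA 0 / dB 0 ≤ … ≤ dA (n-1) / dB (n-1)`, payments set to the
pivot agent `i0`'s disutilities (`p_A = dA i0`, `p_B = dB i0`), and an allocation `x`
giving only `A`-chores to agents `h < i0` and only `B`-chores to agents `h > i0`:
`(x, p)` satisfies the MPB condition for every agent, and hence `x` is fractionally
Pareto-optimal. -/
theorem two_chore_types_MPB_fPO {n : ℕ} {χ : Type*} [Fintype χ] [DecidableEq χ]
    (ty : χ → Bool)
    (dA dB : Fin n → ℝ) (hdA : ∀ i, 0 < dA i) (hdB : ∀ i, 0 < dB i)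
    (hsorted : Monotone fun i => dA i / dB i)
    (i0 : Fin n)
    (x : Fin n → Finset χ)
    (halloc : ∀ c : χ, ∃! h : Fin n, c ∈ x h)
    (hA : ∀ h : Fin n, h < i0 → ∀ c ∈ x h, ty c = true)
    (hB : ∀ h : Fin n, i0 < h → ∀ c ∈ x h, ty c = false) :
    -- the MPB condition, with disutilities `d h c = if ty c then dA h else dB h`
    -- and payments `p c = if ty c then dA i0 else dB i0`:
    (∀ h : Fin n, ∀ c ∈ x h, ∀ c' : χ,
        (if ty c then dA h else dB h) / (if ty c then dA i0 else dB i0)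
          ≤ (if ty c' then dA h else dB h) / (if ty c' then dA i0 else dB i0))
    -- and `x` is fractionally Pareto-optimal:
    ∧ ¬ ∃ z : Fin n → χ → ℝ,
        (∀ h c, 0 ≤ z h c) ∧ (∀ c : χ, ∑ h : Fin n, z h c = 1)
        ∧ (∀ h : Fin n,
            (∑ c : χ, z h c * (if ty c then dA h else dB h))
              ≤ ∑ c ∈ x h, (if ty c then dA h else dB h))
        ∧ (∃ h : Fin n,
            (∑ c : χ, z h c * (if ty c then dA h else dB h))
              < ∑ c ∈ x h, (if ty c then dA h else dB h)) := by
  have mpb : ∀ h : Fin n, ∀ c ∈ x h, ∀ c' : χ,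
      (if ty c then dA h else dB h) / (if ty c then dA i0 else dB i0)
        ≤ (if ty c' then dA h else dB h) / (if ty c' then dA i0 else dB i0) := by
    intro h c hc c'
    split_ifs with t t' t'
    · exact le_refl _
    · -- c is A, c' is B : need h ≤ i0
      have hle : h ≤ i0 := by
        by_contra hlt
        push_neg at hlt
        have := hB h hlt c hc
        simp [this] at t
      have hs := hsorted hle
      simp only at hs
      rw [div_le_div_iff₀ (hdB h) (hdB i0)] at hs
      rw [div_le_div_iff₀ (hdA i0) (hdB i0)]
      nlinarith
    · -- c is B, c' is A : need i0 ≤ h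
      have hle : i0 ≤ h := by
        by_contra hlt
        push_neg at hlt
        have := hA h hlt c hc
        simp [this] at t
      have hs := hsorted hle
      simp only at hs
      rw [div_le_div_iff₀ (hdB i0) (hdB h)] at hs
      rw [div_le_div_iff₀ (hdB i0) (hdA i0)]
      nlinarith
    · exact le_refl _
  refine ⟨mpb, ?_⟩
  exact firstWelfare_aux (fun h c => if ty c then dA h else dB h)
    (fun c => if ty c then dA i0 else dB i0)
    (fun h c => by by_cases t : ty c <;> simp [t, hdA, hdB])
    (fun c => by by_cases t : ty c <;> simp [t, hdA, hdB])
    x halloc mpb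
end

section
/- Transferring a chore from the unique weighted big earner to a weighted least earner preserves the invariant that only the big earner has wpEF1-envy: if in (x, p) only agent i wpEF1-envies anyone, and x' is obtained from x by moving one chore j from x_i to x_ℓ where ℓ is a weighted least earner (ℓ in argmin_h p(x_h)/w_h), then in (x', p) no agent other than i wpEF1-envies any agent. -/
open Finset

/-- The allocation obtained from `x` by moving one chore `j` from agent `i`'s bundle to
agent `ℓ`'s bundle. -/
def transferChore {ι χ : Type*} [DecidableEq ι] [DecidableEq χ]
    (x : ι → Finset χ) (i ℓ : ι) (j : χ) : ι → Finset χ :=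
  fun a => if a = i then (x i).erase j else if a = ℓ then insert j (x ℓ) else x a


lemma pm1_le_erase {χ : Type*} [DecidableEq χ] (p : χ → ℝ) {S : Finset χ} {j : χ}
    (hj : j ∈ S) : pm1 p S ≤ ∑ c ∈ S.erase j, p c := by
  rw [pm1, dif_pos ⟨j, hj⟩]
  exact Finset.inf'_le _ hj

/-- Transferring a chore from the unique weighted big earner to a weighted least earner
preserves the invariant that only the big earner has wpEF1-envy: if in `(x, p)` only
agent `i` wpEF1-envies anyone (and `i` does envy someone, i.e. the allocation is not
wpEF1, and `i` is the weighted big earner), and `x'` is obtained from `x` by moving one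
chore `j ∈ x i` to a weighted least earner `ℓ`, then in `(x', p)` no agent other than
`i` wpEF1-envies any agent. -/
theorem transfer_preserves_unique_envier {ι χ : Type*} [DecidableEq ι] [DecidableEq χ]
    (w : ι → ℝ) (hw : ∀ a, 0 < w a)
    (p : χ → ℝ) (hp : ∀ c, 0 ≤ p c)
    (x : ι → Finset χ) (i ℓ : ι) (j : χ)
    (hil : i ≠ ℓ) (hj : j ∈ x i) (hjl : j ∉ x ℓ)
    -- only agent `i` wpEF1-envies anyone:
    (honly : ∀ a : ι, a ≠ i → ∀ b : ι, ¬ ((∑ c ∈ x b, p c) / w b < pm1 p (x a) / w a))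
    -- the allocation is not wpEF1 (agent `i` envies someone):
    (henvy : ∃ b : ι, (∑ c ∈ x b, p c) / w b < pm1 p (x i) / w i)
    -- `i` is the weighted big earner:
    (hBE : ∀ a : ι, pm1 p (x a) / w a ≤ pm1 p (x i) / w i)
    -- `ℓ` is a weighted least earner:
    (hLE : ∀ a : ι, (∑ c ∈ x ℓ, p c) / w ℓ ≤ (∑ c ∈ x a, p c) / w a) :
    ∀ a : ι, a ≠ i → ∀ b : ι,
      ¬ ((∑ c ∈ transferChore x i ℓ j b, p c) / w b
          < pm1 p (transferChore x i ℓ j a) / w a) := by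
  intro a ha b
  rw [not_lt]
  have hxi : transferChore x i ℓ j i = (x i).erase j := by simp [transferChore]
  have hxl : transferChore x i ℓ j ℓ = insert j (x ℓ) := by
    simp [transferChore, Ne.symm hil]
  have hkey : pm1 p (transferChore x i ℓ j a) / w a ≤ (∑ c ∈ x ℓ, p c) / w ℓ ∨
      pm1 p (transferChore x i ℓ j a) = pm1 p (x a) := by
    by_cases hal : a = ℓ
    · left
      rw [hal, hxl]
      have h1 : pm1 p (insert j (x ℓ)) ≤ ∑ c ∈ x ℓ, p c := by
        have := pm1_le_erase p (S := insert j (x ℓ)) (j := j) (Finset.mem_insert_self j _)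
        rwa [Finset.erase_insert hjl] at this
      exact div_le_div_of_nonneg_right h1 (hw ℓ).le
    · right
      simp only [transferChore, if_neg ha, if_neg hal]
  have htrans : ∀ u : ℝ, (∀ b' : ι, u ≤ (∑ c ∈ x b', p c) / w b') →
      u ≤ (∑ c ∈ transferChore x i ℓ j b, p c) / w b := by
    intro u hu
    by_cases hbi : b = i
    · rw [hbi, hxi]
      obtain ⟨b0, hb0⟩ := henvy
      have h2 : pm1 p (x i) / w i ≤ (∑ c ∈ (x i).erase j, p c) / w i :=
        div_le_div_of_nonneg_right (pm1_le_erase p hj) (hw i).le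
      exact (hu b0).trans (le_of_lt (lt_of_lt_of_le hb0 h2))
    · by_cases hbl : b = ℓ
      · rw [hbl, hxl, Finset.sum_insert hjl]
        refine (hu ℓ).trans ?_
        apply div_le_div_of_nonneg_right _ (hw ℓ).le
        linarith [hp j]
      · simp only [transferChore, if_neg hbi, if_neg hbl]
        exact hu b
  rcases hkey with h | h
  · exact h.trans (htrans _ hLE)
  · rw [h]
    exact htrans _ (fun b' => le_of_not_gt (honly a ha b'))
end

section
/- Replacing a weighted agent by unweighted copies does not preserve fairness: there exists an instance with two agents a, b (w_a = 1, w_b = 2) and three chores with disutilities d_a = (1,10,10), d_b = (2,10,10), such that some EF1 and PO allocation of the unweighted 3-agent instance obtained by splitting b into two unit copies, when the copies' bundles are merged back, is not wEF1 for the original weighted instance. -/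
open Finset

/-- `x` is a partition of all chores: every chore goes to exactly one agent. -/
def IsPartition {ι χ : Type*} (x : ι → Finset χ) : Prop :=
  ∀ c : χ, ∃! i : ι, c ∈ x i

/-- Weighted envy-freeness up to one chore for disutilities `d` and weights `w`. -/
def WEF1 {ι χ : Type*} [DecidableEq χ] (d : ι → χ → ℝ) (w : ι → ℝ)
    (x : ι → Finset χ) : Prop :=
  ∀ i h : ι, x i = ∅ ∨ ∃ j ∈ x i,
    (∑ c ∈ (x i).erase j, d i c) / w i ≤ (∑ c ∈ x h, d i c) / w h

/-- Envy-freeness up to one chore (unweighted). -/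
def EF1 {ι χ : Type*} [DecidableEq χ] (d : ι → χ → ℝ) (x : ι → Finset χ) : Prop :=
  ∀ i h : ι, x i = ∅ ∨ ∃ j ∈ x i,
    (∑ c ∈ (x i).erase j, d i c) ≤ ∑ c ∈ x h, d i c

/-- Pareto-optimality of `x` among integral allocations for disutilities `d`. -/
def PO {ι χ : Type*} (d : ι → χ → ℝ) (x : ι → Finset χ) : Prop :=
  ¬ ∃ y : ι → Finset χ, IsPartition y
    ∧ (∀ i : ι, (∑ c ∈ y i, d i c) ≤ ∑ c ∈ x i, d i c)
    ∧ (∃ i : ι, (∑ c ∈ y i, d i c) < ∑ c ∈ x i, d i c)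

instance {α : Type*} [Fintype α] [DecidableEq α] (p : α → Prop) [DecidablePred p] :
    Decidable (∃! x, p x) := by
  unfold ExistsUnique; infer_instance

def dN : Fin 3 → Fin 3 → ℕ := ![![1, 10, 10], ![2, 10, 10], ![2, 10, 10]]

lemma cast_sum (i : Fin 3) (s : Finset (Fin 3)) :
    ∑ c ∈ s, (![![1, 10, 10], ![2, 10, 10], ![2, 10, 10]] : Fin 3 → Fin 3 → ℝ) i c
      = ((∑ c ∈ s, dN i c : ℕ) : ℝ) := by
  rw [Nat.cast_sum]
  refine Finset.sum_congr rfl fun c _ => ?_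
  fin_cases i <;> fin_cases c <;> norm_num [dN]

set_option maxRecDepth 10000 in
lemma po_nat : ¬ ∃ y : Fin 3 → Finset (Fin 3), IsPartition y
    ∧ (∀ i : Fin 3, (∑ c ∈ y i, dN i c) ≤ ∑ c ∈ (![{0}, {1}, {2}] : Fin 3 → Finset (Fin 3)) i, dN i c)
    ∧ (∃ i : Fin 3, (∑ c ∈ y i, dN i c) < ∑ c ∈ (![{0}, {1}, {2}] : Fin 3 → Finset (Fin 3)) i, dN i c) := by
  unfold IsPartition
  decide

/-- Replacing a weighted agent by unweighted copies does not preserve fairness: in the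
instance with agents `a, b` (`w_a = 1`, `w_b = 2`) and three chores with disutilities
`d_a = (1,10,10)`, `d_b = (2,10,10)`, some EF1 and PO allocation of the unweighted
3-agent instance obtained by splitting `b` into two unit copies is, after merging the
copies' bundles back, not wEF1 for the original weighted instance. -/
theorem copies_do_not_preserve_wEF1 :
    ∃ y : Fin 3 → Finset (Fin 3),
      IsPartition y
      ∧ EF1 (![![1, 10, 10], ![2, 10, 10], ![2, 10, 10]] : Fin 3 → Fin 3 → ℝ) y
      ∧ PO (![![1, 10, 10], ![2, 10, 10], ![2, 10, 10]] : Fin 3 → Fin 3 → ℝ) y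
      ∧ ¬ WEF1 (![![1, 10, 10], ![2, 10, 10]] : Fin 2 → Fin 3 → ℝ)
          (![1, 2] : Fin 2 → ℝ) ![y 0, y 1 ∪ y 2] := by
  refine ⟨![{0}, {1}, {2}], ?_, ?_, ?_, ?_⟩
  · unfold IsPartition; decide
  · intro i h
    right
    fin_cases i <;> fin_cases h <;>
      first
      | exact ⟨0, by decide, by norm_num [Matrix.cons_val_two, Matrix.vecHead, Matrix.vecTail]⟩
      | exact ⟨1, by decide, by norm_num [Matrix.cons_val_two, Matrix.vecHead, Matrix.vecTail]⟩
      | exact ⟨2, by decide, by norm_num [Matrix.cons_val_two, Matrix.vecHead, Matrix.vecTail]⟩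
  · intro ⟨y, hp, hle, i, hlt⟩
    refine po_nat ⟨y, hp, fun j => ?_, i, ?_⟩
    · have := hle j; rw [cast_sum, cast_sum] at this; exact_mod_cast this
    · rw [cast_sum, cast_sum] at hlt; exact_mod_cast hlt
  · intro hw
    rcases hw 1 0 with h | ⟨j, hj, hle⟩
    · exact absurd h (by decide)
    · simp only [Matrix.cons_val_one, Matrix.cons_val_zero, Matrix.cons_val_two, Matrix.tail_cons, Matrix.head_cons] at hj hle
      fin_cases hj
      · rw [show ({1} ∪ {2} : Finset (Fin 3)).erase 1 = {2} from rfl] at hle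
        norm_num [Matrix.cons_val_two, Matrix.vecHead, Matrix.vecTail] at hle
      · rw [show ({1} ∪ {2} : Finset (Fin 3)).erase 2 = {1} from rfl] at hle
        norm_num [Matrix.cons_val_two, Matrix.vecHead, Matrix.vecTail] at hle
end
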